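/- Let R be a finite ring with unity, let I be a left ideal of R, and suppose M_R(I) is a minimal subset of itself (i.e., no proper subset E ⊊ M_R(I) satisfies ⋂_{M∈E} M = ⋂_{M∈M_R(I)} M). Then for any disjoint subsets M_1, M_2 of M_R(I) and any E_1 ⊆ M_1 and E_2 ⊆ M_2, one has |I| / |⋂_{M ∈ E_1 ∪ E_2} M| = (|I| / |⋂_{M∈E_1} M|) · (|I| / |⋂_{M∈E_2} M|). -/

import Mathlib

open scoped BigOperators
open Classical

variable {R : Type*}

/-- The left ideal of `R` generated by `x`, i.e. `(x)_ℓ`. -/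
def lgen [Ring R] (x : R) : Submodule R R := Submodule.span R {x}

/-- `[x]_ℓ = {y : (y)_ℓ = (x)_ℓ}`. -/
def classL [Ring R] (x : R) : Set R := {y | lgen y = lgen x}

/-- The character sum `C_χ(x) = ∑_{s ∈ [x]_ℓ} χ(s)`. -/
noncomputable def CchiL [Ring R] (χ : AddChar R ℂ) (x : R) : ℂ :=
  ∑ᶠ s ∈ classL x, χ s

/-- The set `M_R(J)` of maximal `R`-left ideals of `J`. -/
def maxROf [Ring R] (J : Submodule R R) : Set (Submodule R R) :=
  {M | M < J ∧ ∀ I' : Submodule R R, M < I' → ¬ I' < J}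

/-- The set `M_R(J, K)` of maximal `R`-left ideals of `J` containing `K`. -/
def maxROfAbove [Ring R] (J K : Submodule R R) : Set (Submodule R R) :=
  {M | M ∈ maxROf J ∧ K ≤ M}

/-- Intersection of the family `E` of left ideals, with the convention that the
empty intersection is `J`. -/
noncomputable def interIn [Ring R] (J : Submodule R R) (E : Set (Submodule R R)) :
    Submodule R R :=
  if E = ∅ then J else sInf E

/-- The Möbius function `μ_R(I, J)` on left ideals of `R`. -/
noncomputable def muR [Ring R] (I J : Submodule R R) : ℤ :=
  if I = J then 1
  else if I < J ∧ ∃ E : Set (Submodule R R),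
      E ⊆ maxROf J ∧ E.Nonempty ∧ interIn J E = I then
    (Nat.card {E : Set (Submodule R R) //
        E ⊆ maxROf J ∧ interIn J E = I ∧ Even (Nat.card E)} : ℤ)
      - (Nat.card {E : Set (Submodule R R) //
        E ⊆ maxROf J ∧ interIn J E = I ∧ Odd (Nat.card E)} : ℤ)
  else 0

/-- The function `φ_R(I, J)` on left ideals of `R`. -/
noncomputable def phiR [Ring R] (I J : Submodule R R) : ℂ :=
  if I = J then 1
  else if I < J ∧ ∃ E : Set (Submodule R R),
      E ⊆ maxROf J ∧ E.Nonempty ∧ interIn J E = I then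
    ∏ᶠ M ∈ maxROfAbove J I, ((Nat.card J : ℂ) / (Nat.card M : ℂ) - 1)
  else 1

/-!
If `M ∈ M_R(I)` does not belong to `E ⊆ M_R(I)`, minimality of `M_R(I)` forbids `⋂ E ≤ M`
(else `M` could be dropped from `M_R(I)`), so maximality of `M` forces `M + ⋂ E = I`. The second
isomorphism theorem then gives `[⋂ E : M ∩ ⋂ E] = [I : M]`, hence `[I : ⋂ E] = ∏_{M ∈ E} [I : M]`
by induction on `E`, and a product over a disjoint union splits.
-/

theorem AddSubgroup.relIndex_inf_eq_mul_of_sup_eq {G : Type*} [AddCommGroup G]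
    {A B C : AddSubgroup G} (h : A ⊔ B = C) :
    (A ⊓ B).relIndex C = A.relIndex C * B.relIndex C := by
  rw [← relIndex_mul_relIndex _ _ _ inf_le_right (h ▸ le_sup_right), inf_relIndex_right,
    ← relIndex_sup_left, h]

theorem AddSubgroup.card_div_card_eq_relIndex {G : Type*} [AddGroup G] {H K : AddSubgroup G}
    [Finite H] (h : H ≤ K) : (Nat.card K : ℚ) / Nat.card H = H.relIndex K := by
  have hH : (Nat.card H : ℚ) ≠ 0 := Nat.cast_ne_zero.2 Nat.card_pos.ne'
  rw [div_eq_iff hH, ← relIndex_bot_left, ← relIndex_bot_left,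
    ← relIndex_mul_relIndex ⊥ H K bot_le h, Nat.cast_mul, mul_comm]

theorem Submodule.inf_toAddSubgroup {M : Type*} [Ring R] [AddCommGroup M] [Module R M]
    (p q : Submodule R M) : (p ⊓ q).toAddSubgroup = p.toAddSubgroup ⊓ q.toAddSubgroup :=
  rfl

section interIn

variable [Ring R] {J : Submodule R R} {E F : Set (Submodule R R)}

theorem interIn_le (hE : ∀ M ∈ E, M ≤ J) : interIn J E ≤ J := by
  unfold interIn
  split_ifs with h
  · exact le_rfl
  · obtain ⟨M, hM⟩ := Set.nonempty_iff_ne_empty.2 h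
    exact (sInf_le hM).trans (hE M hM)

theorem interIn_anti (hEF : E ⊆ F) (hF : ∀ M ∈ F, M ≤ J) : interIn J F ≤ interIn J E := by
  by_cases hE : E = ∅
  · simpa [interIn, hE] using interIn_le hF
  · have hF' : F ≠ ∅ := fun h => hE (Set.subset_eq_empty hEF h)
    simpa [interIn, hE, hF'] using sInf_le_sInf hEF

theorem interIn_insert {M : Submodule R R} (hM : M ≤ J) :
    interIn J (insert M E) = M ⊓ interIn J E := by
  by_cases hE : E = ∅
  · simp [interIn, hE, inf_eq_left.2 hM]
  · simp [interIn, hE, (Set.insert_nonempty M E).ne_empty, sInf_insert]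

end interIn

section maxROf

variable [Ring R] {I : Submodule R R}

theorem sup_interIn_eq
    (hmin : ∀ E : Set (Submodule R R), E ⊂ maxROf I → interIn I E ≠ interIn I (maxROf I))
    {E : Set (Submodule R R)} (hE : E ⊆ maxROf I) {M : Submodule R R} (hM : M ∈ maxROf I)
    (hME : M ∉ E) : M ⊔ interIn I E = I := by
  have hle : M ⊔ interIn I E ≤ I := sup_le hM.1.le (interIn_le fun N hN => (hE hN).1.le)
  refine hle.eq_of_not_lt fun hlt => hM.2 _ (lt_of_le_of_ne le_sup_left fun hsup => ?_) hlt
  have hEM : E ⊆ maxROf I \ {M} := fun N hN => ⟨hE hN, fun h => hME (h ▸ hN)⟩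
  have hins : insert M (maxROf I \ {M}) = maxROf I := by simp [hM]
  refine hmin (maxROf I \ {M}) ⟨Set.sdiff_subset, fun h => (h hM).2 rfl⟩ ?_
  conv_rhs => rw [← hins, interIn_insert hM.1.le]
  exact (inf_eq_right.2 ((interIn_anti hEM fun N hN => hN.1.1.le).trans
    (hsup ▸ le_sup_right))).symm

theorem relIndex_interIn_eq_finprod
    (hmin : ∀ E : Set (Submodule R R), E ⊂ maxROf I → interIn I E ≠ interIn I (maxROf I))
    {E : Set (Submodule R R)} (hEfin : E.Finite) (hE : E ⊆ maxROf I) :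
    (interIn I E).toAddSubgroup.relIndex I.toAddSubgroup =
      ∏ᶠ M ∈ E, M.toAddSubgroup.relIndex I.toAddSubgroup := by
  induction E, hEfin using Set.Finite.induction_on with
  | empty => simp [interIn]
  | @insert M E hME hEfin ih =>
    have hE' : E ⊆ maxROf I := (Set.subset_insert _ _).trans hE
    have hM : M ∈ maxROf I := hE (Set.mem_insert _ _)
    rw [interIn_insert hM.1.le, Submodule.inf_toAddSubgroup, finprod_mem_insert _ hME hEfin,
      ← ih hE']
    exact AddSubgroup.relIndex_inf_eq_mul_of_sup_eq
      (by rw [← Submodule.sup_toAddSubgroup, sup_interIn_eq hmin hE' hM hME])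

end maxROf

theorem stmt13 [Ring R] [Fintype R] (I : Submodule R R)
    (hmin : ∀ E : Set (Submodule R R), E ⊂ maxROf I →
      interIn I E ≠ interIn I (maxROf I))
    (M1 M2 : Set (Submodule R R)) (hM1 : M1 ⊆ maxROf I) (hM2 : M2 ⊆ maxROf I)
    (hdisj : Disjoint M1 M2)
    (E1 E2 : Set (Submodule R R)) (hE1 : E1 ⊆ M1) (hE2 : E2 ⊆ M2) :
    (Nat.card I : ℚ) / (Nat.card (interIn I (E1 ∪ E2)) : ℚ) =
      ((Nat.card I : ℚ) / (Nat.card (interIn I E1) : ℚ)) *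
        ((Nat.card I : ℚ) / (Nat.card (interIn I E2) : ℚ)) := by
  have hindex : ∀ E ⊆ maxROf I, (Nat.card I : ℚ) / Nat.card (interIn I E) =
      ((∏ᶠ M ∈ E, M.toAddSubgroup.relIndex I.toAddSubgroup : ℕ) : ℚ) := fun E hE => by
    rw [← relIndex_interIn_eq_finprod hmin E.toFinite hE]
    exact AddSubgroup.card_div_card_eq_relIndex (H := (interIn I E).toAddSubgroup)
      (K := I.toAddSubgroup) (interIn_le fun N hN => (hE hN).1.le)
  rw [hindex _ (Set.union_subset (hE1.trans hM1) (hE2.trans hM2)), hindex _ (hE1.trans hM1),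
    hindex _ (hE2.trans hM2), finprod_mem_union (hdisj.mono hE1 hE2) E1.toFinite E2.toFinite,
    Nat.cast_mul]
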